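/- arXiv:2508.21288 — 7 statements merged into one kernel-verified Lean document; each statement's English description precedes it below -/
import Mathlib

section
/- Let V be a finite set of Boolean variables, W : V × {0,1} → F a weight function into a field F, and v ∈ V. Let v' ∉ V be a fresh Boolean variable and define W' : (V ∪ {v'}) × {0,1} → F by W'(u, b) = W(u, b) for all u ∈ V and b ∈ {0,1} except W'(v, 0) = 2·W(v, 0), and W'(v', 0) = 1/2, W'(v', 1) = 1. Then for every Boolean formula φ over V, WMC(φ ∧ (v ↔ v'), W') = WMC(φ, W). -/
/-!
Summing out the fresh variable `v'` first, the constraint `v ↔ v'` forces `v' = τ(v)`, so each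
model `τ` of `φ` contributes its old weight times the weight of `v'` at `τ(v)`. This is the
same as multiplying the weights of `v` by those of `v'`, and `2 · W(v, 0) · 1/2 = W(v, 0)`.
-/

/-- The weighted model count of a Boolean formula `φ` over a finite set of Boolean
variables `V` with respect to a weight function `W : V × Bool → F`:
`WMC(φ, W) = ∑_{τ ⊨ φ} ∏_{v ∈ V} W(v, τ(v))`. -/
def WMC {V : Type*} [Fintype V] [DecidableEq V] {F : Type*} [Field F]
    (φ : (V → Bool) → Bool) (W : V → Bool → F) : F :=
  ∑ τ : V → Bool, if φ τ then ∏ v : V, W v (τ v) else 0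

section
variable {V : Type*} [Fintype V] [DecidableEq V]

theorem prod_update_mul_weight {β M : Type*} [CommMonoid M] (W : V → β → M) (v : V) (c : β → M)
    (σ : V → β) :
    ∏ u, Function.update W v (fun b => W v b * c b) u (σ u) = (∏ u, W u (σ u)) * c (σ v) := by
  rw [Fintype.prod_eq_mul_prod_compl v, Fintype.prod_eq_mul_prod_compl v (fun u => W u (σ u)),
    Function.update_self, mul_right_comm]
  congr 2
  refine Finset.prod_congr rfl fun u hu => ?_
  rw [Function.update_of_ne (by simpa using hu)]

theorem wmc_and_beq_fresh_var {F : Type*} [Field F] (φ : (V → Bool) → Bool) (W : V → Bool → F)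
    (c : Bool → F) (v : V) :
    WMC (fun τ : V ⊕ Unit → Bool =>
        φ (fun u => τ (Sum.inl u)) && (τ (Sum.inl v) == τ (Sum.inr ())))
      (Sum.elim W fun _ => c) = WMC φ (Function.update W v fun b => W v b * c b) := by
  unfold WMC
  rw [← (Equiv.sumArrowEquivProdArrow V Unit Bool).symm.sum_comp, Fintype.sum_prod_type]
  refine Fintype.sum_congr _ _ fun σ => ?_
  rw [← (Equiv.funUnique Unit Bool).symm.sum_comp, Fintype.sum_bool, prod_update_mul_weight]
  simp only [Equiv.sumArrowEquivProdArrow_symm_apply_inl,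
    Equiv.sumArrowEquivProdArrow_symm_apply_inr, Equiv.funUnique_symm_apply, uniqueElim_const,
    Fintype.prod_sum_type, Sum.elim_inl, Sum.elim_inr, Fintype.prod_unique]
  cases σ v <;> by_cases hφ : φ σ <;> simp [hφ]
end

/-- Adding a fresh variable `v'` (the `Unit` summand), tying it to `v`
via `v ↔ v'`, doubling `W(v,0)` and giving `v'` the weights `1/2` (false) and `1`
(true) leaves the weighted model count unchanged.  (`F` has characteristic ≠ 2.) -/
theorem wmc_fresh_var_rescale {V : Type*} [Fintype V] [DecidableEq V]
    {F : Type*} [Field F] (h2 : (2 : F) ≠ 0)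
    (W : V → Bool → F) (v : V) :
    ∀ φ : (V → Bool) → Bool,
      WMC (fun τ : V ⊕ Unit → Bool =>
          φ (fun u => τ (Sum.inl u)) && (τ (Sum.inl v) == τ (Sum.inr ())))
        (Sum.elim
          (fun u b => if u = v ∧ b = false then 2 * W u b else W u b)
          (fun _ b => if b then 1 else 1 / 2))
      = WMC φ W := by
  intro φ
  rw [wmc_and_beq_fresh_var]
  congr 1
  funext u b
  rcases eq_or_ne u v with rfl | hu
  · cases b
    · simpa [div_eq_mul_inv] using mul_div_cancel_left₀ (W u false) h2
    · simp
  · simp [hu]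
end

section
/- Let V₁ and V₂ be disjoint finite sets of Boolean variables, φ₁ a Boolean formula over V₁, φ₂ a Boolean formula over V₂, and W₁ : V₁ × {0,1} → F, W₂ : V₂ × {0,1} → F weight functions into a field F with WMC(⊤, W₁) ≠ 0 and WMC(⊤, W₂) ≠ 0. Let c ∉ V₁ ∪ V₂ be a fresh Boolean variable and define W_c : {c} × {0,1} → F by W_c(c, 1) = 1/WMC(⊤, W₁) and W_c(c, 0) = 1/WMC(⊤, W₂). Then WMC((¬c → φ₁) ∧ (c → φ₂), W₁ ∪ W₂ ∪ W_c) = WMC(φ₁, W₁) + WMC(φ₂, W₂). -/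
/-- The addition gadget.  For formulas `φ₁, φ₂` over disjoint variable
sets `V₁, V₂` with `WMC(⊤, W₁) ≠ 0 ≠ WMC(⊤, W₂)` and a fresh control variable `c`
(the `Unit` summand) weighted by `W_c(c,1) = 1/WMC(⊤,W₁)` and `W_c(c,0) = 1/WMC(⊤,W₂)`,
`WMC((¬c → φ₁) ∧ (c → φ₂), W₁ ∪ W₂ ∪ W_c) = WMC(φ₁, W₁) + WMC(φ₂, W₂)`. -/
theorem wmc_add_gadget {V₁ V₂ : Type*} [Fintype V₁] [DecidableEq V₁]
    [Fintype V₂] [DecidableEq V₂] {F : Type*} [Field F]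
    (φ₁ : (V₁ → Bool) → Bool) (φ₂ : (V₂ → Bool) → Bool)
    (W₁ : V₁ → Bool → F) (W₂ : V₂ → Bool → F)
    (hW₁ : WMC (fun _ : V₁ → Bool => true) W₁ ≠ 0)
    (hW₂ : WMC (fun _ : V₂ → Bool => true) W₂ ≠ 0) :
    WMC (fun τ : (V₁ ⊕ V₂) ⊕ Unit → Bool =>
        (τ (Sum.inr ()) || φ₁ (fun v => τ (Sum.inl (Sum.inl v)))) &&
        (!(τ (Sum.inr ())) || φ₂ (fun v => τ (Sum.inl (Sum.inr v)))))
      (Sum.elim (Sum.elim W₁ W₂)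
        (fun _ b => if b then (WMC (fun _ : V₁ → Bool => true) W₁)⁻¹
                    else (WMC (fun _ : V₂ → Bool => true) W₂)⁻¹))
    = WMC φ₁ W₁ + WMC φ₂ W₂ := by
  classical
  -- an equivalence between triples and assignments on the big variable set
  let e : (Bool × (V₁ → Bool) × (V₂ → Bool)) ≃ ((V₁ ⊕ V₂) ⊕ Unit → Bool) :=
    { toFun := fun p => Sum.elim (Sum.elim p.2.1 p.2.2) (fun _ => p.1)
      invFun := fun τ => (τ (Sum.inr ()), fun v => τ (Sum.inl (Sum.inl v)),
        fun v => τ (Sum.inl (Sum.inr v)))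
      left_inv := by rintro ⟨b, σ₁, σ₂⟩; rfl
      right_inv := by
        intro τ; funext x
        rcases x with (v | v) | ⟨⟩ <;> rfl }
  have key : ∀ g : ((V₁ ⊕ V₂) ⊕ Unit → Bool) → F,
      ∑ τ, g τ = ∑ p : Bool × (V₁ → Bool) × (V₂ → Bool), g (e p) :=
    fun g => (Fintype.sum_equiv e _ _ fun p => rfl).symm
  rw [WMC, key]
  rw [Fintype.sum_prod_type]
  have hbody : ∀ (b : Bool) (σ₁ : V₁ → Bool) (σ₂ : V₂ → Bool),
      (if (e (b, σ₁, σ₂) (Sum.inr ()) || φ₁ fun v => e (b, σ₁, σ₂) (Sum.inl (Sum.inl v))) &&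
          (!(e (b, σ₁, σ₂) (Sum.inr ())) || φ₂ fun v => e (b, σ₁, σ₂) (Sum.inl (Sum.inr v)))
        then ∏ v : (V₁ ⊕ V₂) ⊕ Unit,
          Sum.elim (Sum.elim W₁ W₂)
            (fun _ b => if b then (WMC (fun _ : V₁ → Bool => true) W₁)⁻¹
              else (WMC (fun _ : V₂ → Bool => true) W₂)⁻¹) v (e (b, σ₁, σ₂) v)
        else 0)
      = (if (b || φ₁ σ₁) && (!b || φ₂ σ₂) then
          (∏ v : V₁, W₁ v (σ₁ v)) * (∏ v : V₂, W₂ v (σ₂ v)) *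
            (if b then (WMC (fun _ : V₁ → Bool => true) W₁)⁻¹
              else (WMC (fun _ : V₂ → Bool => true) W₂)⁻¹) else 0) := by
    intro b σ₁ σ₂
    have : (∏ v : (V₁ ⊕ V₂) ⊕ Unit,
        Sum.elim (Sum.elim W₁ W₂)
          (fun _ b => if b then (WMC (fun _ : V₁ → Bool => true) W₁)⁻¹
            else (WMC (fun _ : V₂ → Bool => true) W₂)⁻¹) v (e (b, σ₁, σ₂) v))
        = (∏ v : V₁, W₁ v (σ₁ v)) * (∏ v : V₂, W₂ v (σ₂ v)) *
            (if b then (WMC (fun _ : V₁ → Bool => true) W₁)⁻¹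
              else (WMC (fun _ : V₂ → Bool => true) W₂)⁻¹) := by
      rw [Fintype.prod_sum_type, Fintype.prod_sum_type]
      simp [e]
    rw [this]
    rfl
  simp only [hbody]
  rw [Fintype.sum_bool]
  simp only [Fintype.sum_prod_type, Bool.true_or, Bool.not_true, Bool.false_or,
    Bool.true_and, Bool.not_false, Bool.or_true, Bool.and_true, if_true,
    Bool.false_eq_true, if_false]
  have h1 : (∑ σ₁ : V₁ → Bool, ∑ σ₂ : V₂ → Bool,
      if φ₂ σ₂ then (∏ v : V₁, W₁ v (σ₁ v)) * (∏ v : V₂, W₂ v (σ₂ v)) *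
        (WMC (fun _ : V₁ → Bool => true) W₁)⁻¹ else 0) = WMC φ₂ W₂ := by
    have : ∀ σ₁ : V₁ → Bool, (∑ σ₂ : V₂ → Bool,
        if φ₂ σ₂ then (∏ v : V₁, W₁ v (σ₁ v)) * (∏ v : V₂, W₂ v (σ₂ v)) *
          (WMC (fun _ : V₁ → Bool => true) W₁)⁻¹ else 0)
        = (∏ v : V₁, W₁ v (σ₁ v)) * (WMC (fun _ : V₁ → Bool => true) W₁)⁻¹ * WMC φ₂ W₂ := by
      intro σ₁
      simp only [WMC, if_true, Finset.mul_sum]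
      refine Finset.sum_congr rfl fun σ₂ _ => ?_
      split <;> ring
    simp only [this]
    rw [← Finset.sum_mul, ← Finset.sum_mul]
    have : (∑ σ₁ : V₁ → Bool, ∏ v : V₁, W₁ v (σ₁ v)) = WMC (fun _ : V₁ → Bool => true) W₁ := by
      simp [WMC]
    rw [this, mul_inv_cancel₀ hW₁, one_mul]
  have h2 : (∑ σ₁ : V₁ → Bool, ∑ σ₂ : V₂ → Bool,
      if φ₁ σ₁ then (∏ v : V₁, W₁ v (σ₁ v)) * (∏ v : V₂, W₂ v (σ₂ v)) *
        (WMC (fun _ : V₂ → Bool => true) W₂)⁻¹ else 0) = WMC φ₁ W₁ := by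
    have : ∀ σ₁ : V₁ → Bool, (∑ σ₂ : V₂ → Bool,
        if φ₁ σ₁ then (∏ v : V₁, W₁ v (σ₁ v)) * (∏ v : V₂, W₂ v (σ₂ v)) *
          (WMC (fun _ : V₂ → Bool => true) W₂)⁻¹ else 0)
        = (if φ₁ σ₁ then ∏ v : V₁, W₁ v (σ₁ v) else 0) *
            (WMC (fun _ : V₂ → Bool => true) W₂) *
            (WMC (fun _ : V₂ → Bool => true) W₂)⁻¹ := by
      intro σ₁
      have hw : WMC (fun _ : V₂ → Bool => true) W₂
          = ∑ σ₂ : V₂ → Bool, ∏ v : V₂, W₂ v (σ₂ v) := by simp [WMC]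
      rw [hw, Finset.mul_sum, Finset.sum_mul]
      refine Finset.sum_congr rfl fun σ₂ _ => ?_
      split <;> ring
    simp only [this]
    have h' : ∀ σ₁ : V₁ → Bool,
        (if φ₁ σ₁ then ∏ v : V₁, W₁ v (σ₁ v) else 0) *
          WMC (fun _ : V₂ → Bool => true) W₂ *
          (WMC (fun _ : V₂ → Bool => true) W₂)⁻¹
        = (if φ₁ σ₁ then ∏ v : V₁, W₁ v (σ₁ v) else 0) := fun σ₁ => by
      rw [mul_assoc, mul_inv_cancel₀ hW₂, mul_one]
    simp only [h']
    rfl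
  rw [h1, h2, add_comm]
end

section
/- Let q ≥ 2 and suppose the tuple (φ₁, W₁, x, y, q) represents the q^k × q^m matrix M₁ and the tuple (φ₂, W₂, y, z, q) represents the q^n × q^k matrix M₂, where W₁ : V₁ × {0,1} → F and W₂ : V₂ × {0,1} → F are weight functions into a field F, φ₁ is a formula over V₁, φ₂ is a formula over V₂, and V₁ ∩ V₂ = var(y). Then the tuple (φ₁ ∧ φ₂ ∧ val_y, W₁ · W₂, x, z, q) represents the matrix product M₂ · M₁, where (W₁ · W₂)(u, b) equals W₁(u, b) if u ∉ V₂, W₂(u, b) if u ∉ V₁, and W₁(u, b)·W₂(u, b) if u ∈ V₁ ∩ V₂. -/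
/-- `enc` is a family of Boolean formulas (indexed by `ι`) forming a (string of)
`q`-state variable encoding(s) with variable set `vars`: each formula depends only on
the variables in `vars` and has exactly one satisfying assignment of `vars`, and the
formulas for two distinct indices are mutually unsatisfiable. -/
def IsEncoding {V : Type*} {ι : Type*} (vars : Set V)
    (enc : ι → (V → Bool) → Bool) : Prop :=
  (∀ n : ι, ∃ σ : V → Bool, ∀ τ : V → Bool,
      (enc n τ = true ↔ ∀ v ∈ vars, τ v = σ v)) ∧
  (∀ n m : ι, n ≠ m → ∀ τ : V → Bool, ¬(enc n τ = true ∧ enc m τ = true))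

/-- The tuple `(φ, W, x, y, q)` (with input string `x`, indexing the columns by `κ`,
and output string `y`, indexing the rows by `ι`) represents the matrix `M` iff
`M i j = WMC(φ ∧ (x = j) ∧ (y = i), W)` for all `i`, `j`. -/
def Represents {V : Type*} [Fintype V] [DecidableEq V] {F : Type*} [Field F]
    {ι κ : Type*} (φ : (V → Bool) → Bool) (W : V → Bool → F)
    (x : κ → (V → Bool) → Bool) (y : ι → (V → Bool) → Bool)
    (M : Matrix ι κ F) : Prop :=
  ∀ (i : ι) (j : κ), M i j = WMC (fun τ => φ τ && x j τ && y i τ) W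
lemma sum_sum_arrow {ι κ M : Type*} [Fintype ι] [Fintype κ] [DecidableEq ι] [DecidableEq κ]
    [AddCommMonoid M] (f : (ι ⊕ κ → Bool) → M) :
    ∑ τ : ι ⊕ κ → Bool, f τ = ∑ α : ι → Bool, ∑ β : κ → Bool, f (Sum.elim α β) := by
  rw [← ((Equiv.sumArrowEquivProdArrow ι κ Bool).symm.sum_comp f), Fintype.sum_prod_type]
  rfl

lemma sum_encoding {γ M : Type*} [Fintype γ] [DecidableEq γ] [AddCommMonoid M]
    {N : Type*} [Fintype N] (σ : N → γ) (hinj : Function.Injective σ)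
    (g : γ → M) (h0 : ∀ b : γ, (∀ a : N, b ≠ σ a) → g b = 0) :
    ∑ b : γ, g b = ∑ a : N, g (σ a) := by
  rw [← Finset.sum_image (f := g) (g := σ) (s := Finset.univ) (fun x _ y _ h => hinj h)]
  refine (Finset.sum_subset (Finset.subset_univ _) ?_).symm
  intro b _ hb
  refine h0 b fun a hba => hb ?_
  exact Finset.mem_image.mpr ⟨a, Finset.mem_univ a, hba.symm⟩

/-- Matrix multiplication of WMC representations.  The variable set of
the first representation is `V₁ = A ⊕ B`, of the second `V₂ = B ⊕ C`, so that
`V₁ ∩ V₂ = B = var(y)`; the union of the variable sets is `(A ⊕ B) ⊕ C`.  If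
`(φ₁, W₁, x, y, q)` represents `M₁` and `(φ₂, W₂, y, z, q)` represents `M₂`, then
`(φ₁ ∧ φ₂ ∧ val_y, W₁ · W₂, x, z, q)` represents `M₂ · M₁`, where `W₁ · W₂` multiplies
the weights on the common variables `B` and agrees with `W₁`, `W₂` elsewhere. -/
theorem matmul_represents {A B C : Type*} [Fintype A] [DecidableEq A]
    [Fintype B] [DecidableEq B] [Fintype C] [DecidableEq C]
    {F : Type*} [Field F] {q k m n : ℕ} (hq : 2 ≤ q)
    (φ₁ : (A ⊕ B → Bool) → Bool) (φ₂ : (B ⊕ C → Bool) → Bool)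
    (W₁ : A ⊕ B → Bool → F) (W₂ : B ⊕ C → Bool → F)
    (x : Fin (q ^ m) → (A ⊕ B → Bool) → Bool) (xvars : Set (A ⊕ B))
    (hx : IsEncoding xvars x)
    (y : Fin (q ^ k) → (B → Bool) → Bool)
    (hy : IsEncoding (Set.univ : Set B) y)
    (z : Fin (q ^ n) → (B ⊕ C → Bool) → Bool) (zvars : Set (B ⊕ C))
    (hz : IsEncoding zvars z)
    (M₁ : Matrix (Fin (q ^ k)) (Fin (q ^ m)) F)
    (M₂ : Matrix (Fin (q ^ n)) (Fin (q ^ k)) F)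
    (h₁ : Represents φ₁ W₁ x (fun i τ => y i (fun b => τ (Sum.inr b))) M₁)
    (h₂ : Represents φ₂ W₂ (fun j τ => y j (fun b => τ (Sum.inl b))) z M₂) :
    Represents (V := (A ⊕ B) ⊕ C)
      (fun τ =>
        φ₁ (fun v => τ (Sum.inl v)) &&
        φ₂ (Sum.elim (fun b => τ (Sum.inl (Sum.inr b))) (fun c => τ (Sum.inr c))) &&
        decide (∃ a : Fin (q ^ k), y a (fun b => τ (Sum.inl (Sum.inr b))) = true))
      (Sum.elim
        (Sum.elim (fun a => W₁ (Sum.inl a))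
          (fun b bit => W₁ (Sum.inr b) bit * W₂ (Sum.inl b) bit))
        (fun c => W₂ (Sum.inr c)))
      (fun j τ => x j (fun v => τ (Sum.inl v)))
      (fun i τ => z i (Sum.elim (fun b => τ (Sum.inl (Sum.inr b))) (fun c => τ (Sum.inr c))))
      (M₂ * M₁) := by
  obtain ⟨hy1, hy2⟩ := hy
  choose σ hσ using hy1
  have hσ' : ∀ a β, y a β = true ↔ β = σ a := by
    intro a β
    rw [hσ a β]
    constructor
    · intro h; funext v; exact h v (Set.mem_univ v)
    · intro h v _; rw [h]
  have hinj : Function.Injective σ := by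
    intro a a' h
    by_contra hne
    exact hy2 a a' hne (σ a) ⟨(hσ' a (σ a)).mpr rfl, (hσ' a' (σ a)).mpr h⟩
  simp only [Represents, WMC] at h₁ h₂
  intro i j
  rw [Matrix.mul_apply]
  simp only [h₁, h₂, WMC]
  conv_rhs => rw [sum_sum_arrow, sum_sum_arrow, Finset.sum_comm]
  refine Eq.trans ?_ (sum_encoding σ hinj _ ?_).symm
  · refine Finset.sum_congr rfl fun a _ => ?_
    simp only [Sum.elim_inl, Sum.elim_inr]
    have hdec : ∃ a' : Fin (q ^ k), y a' (σ a) = true := ⟨a, (hσ' a (σ a)).mpr rfl⟩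
    simp only [hdec, decide_true, Bool.and_true]
    have hM2 : (∑ τ₂ : B ⊕ C → Bool, if ((φ₂ τ₂ && y a fun b => τ₂ (Sum.inl b)) && z i τ₂) = true
          then ∏ v : B ⊕ C, W₂ v (τ₂ v) else 0)
        = ∑ ρ : C → Bool, if (φ₂ (Sum.elim (σ a) ρ) && z i (Sum.elim (σ a) ρ)) = true
          then ∏ v : B ⊕ C, W₂ v (Sum.elim (σ a) ρ v) else 0 := by
      rw [sum_sum_arrow]
      rw [Finset.sum_eq_single (σ a)]
      · refine Finset.sum_congr rfl fun ρ _ => ?_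
        have hyt : (y a fun b => Sum.elim (σ a) ρ (Sum.inl b)) = true := (hσ' a _).mpr rfl
        simp only [hyt, Bool.and_true]
      · intro β _ hβ
        refine Finset.sum_eq_zero fun ρ _ => ?_
        have hyf : ¬ (y a β = true) := fun h => hβ ((hσ' a β).mp h)
        simp only [Bool.not_eq_true] at hyf
        simp [hyf]
      · intro h; exact absurd (Finset.mem_univ _) h
    have hM1 : (∑ τ₁ : A ⊕ B → Bool, if (φ₁ τ₁ && x j τ₁ && y a fun b => τ₁ (Sum.inr b)) = true
          then ∏ v : A ⊕ B, W₁ v (τ₁ v) else 0)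
        = ∑ α : A → Bool, if (φ₁ (Sum.elim α (σ a)) && x j (Sum.elim α (σ a))) = true
          then ∏ v : A ⊕ B, W₁ v (Sum.elim α (σ a) v) else 0 := by
      rw [sum_sum_arrow]
      refine Finset.sum_congr rfl fun α _ => ?_
      rw [Finset.sum_eq_single (σ a)]
      · have hyt : (y a fun b => Sum.elim α (σ a) (Sum.inr b)) = true := (hσ' a _).mpr rfl
        simp only [hyt, Bool.and_true]
      · intro β _ hβ
        have hyf : ¬ (y a β = true) := fun h => hβ ((hσ' a β).mp h)
        simp only [Bool.not_eq_true] at hyf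
        simp [hyf]
      · intro h; exact absurd (Finset.mem_univ _) h
    rw [hM2, hM1, Finset.sum_mul_sum]
    rw [Finset.sum_comm]
    refine Finset.sum_congr rfl fun α _ => Finset.sum_congr rfl fun ρ _ => ?_
    have hprod : (∏ v : B ⊕ C, W₂ v (Sum.elim (σ a) ρ v)) * ∏ v : A ⊕ B, W₁ v (Sum.elim α (σ a) v)
        = ∏ v : (A ⊕ B) ⊕ C, Sum.elim (Sum.elim (fun a => W₁ (Sum.inl a))
            (fun b bit => W₁ (Sum.inr b) bit * W₂ (Sum.inl b) bit)) (fun c => W₂ (Sum.inr c)) v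
            (Sum.elim (Sum.elim α (σ a)) ρ v) := by
      simp only [Fintype.prod_sum_type, Sum.elim_inl, Sum.elim_inr, Finset.prod_mul_distrib]
      ring
    cases h1 : φ₁ (Sum.elim α (σ a)) <;> cases h2 : φ₂ (Sum.elim (σ a) ρ) <;>
      cases h3 : x j (Sum.elim α (σ a)) <;> cases h4 : z i (Sum.elim (σ a) ρ) <;>
      simp [h1, h2, h3, h4, hprod] <;> (rw [Finset.prod_mul_distrib]; ring)
  · intro β hβ
    have hfalse : ∀ a : Fin (q ^ k), ¬ (y a β = true) := fun a ha => hβ a ((hσ' a β).mp ha)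
    refine Finset.sum_eq_zero fun α _ => Finset.sum_eq_zero fun ρ _ => ?_
    simp only [Sum.elim_inl, Sum.elim_inr]
    simp [hfalse]
end

section
/- Let q ≥ 2 and suppose the tuples (φ₁, W₁, x₁, y₁, q) and (φ₂, W₂, x₂, y₂, q) represent q^n × q^m matrices M₁ and M₂ respectively, where W₁ : V₁ × {0,1} → F and W₂ : V₂ × {0,1} → F are weight functions into a field F with V₁ ∩ V₂ = ∅, WMC(⊤, W₁) ≠ 0, and WMC(⊤, W₂) ≠ 0. Let c be a fresh Boolean variable and x, y fresh strings of q-state encodings of lengths m and n whose variables are disjoint from V₁ ∪ V₂ and from each other. Define φ ≡ (¬c → ((x ↔ x₁) ∧ (y ↔ y₁) ∧ φ₁)) ∧ (c → ((x ↔ x₂) ∧ (y ↔ y₂) ∧ φ₂)), let W_c(c, 1) = 1/WMC(⊤, W₁), W_c(c, 0) = 1/WMC(⊤, W₂), and let W_{xy} be constantly 1 on var(x) ∪ var(y). Then the tuple (φ, W₁ ∪ W₂ ∪ W_c ∪ W_{xy}, x, y, q) represents the matrix sum M₁ + M₂. -/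
/-!
Summing out the fresh variables first, the strings `x` and `y` (weight `1`) are pinned to the
unique assignments encoding `j` and `i`; since distinct codes of `x` are incompatible,
`x ↔ x₁` then reads `x₁ = j`, and likewise for the other strings. The branch `¬c` thus
counts `φ₁ ∧ (x₁ = j) ∧ (y₁ = i)` over `V₁` times an unconstrained count over `V₂`, that is
`M₁ i j * WMC(⊤, W₂)`, and the weight `W_c(c, 0)` cancels the second factor; the branch `c`
is symmetric.
-/
theorem Fintype.sum_sumArrow {α β γ M : Type*} [Fintype α] [Fintype β] [Fintype γ]
    [DecidableEq α] [DecidableEq β] [AddCommMonoid M] (g : (α ⊕ β → γ) → M) :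
    ∑ f, g f = ∑ a : α → γ, ∑ b : β → γ, g (Sum.elim a b) :=
  (Fintype.sum_equiv (Equiv.sumArrowEquivProdArrow α β γ) _ (fun p => g (Sum.elim p.1 p.2))
    fun f => congr_arg g (Sum.elim_comp_inl_inr f).symm).trans (Fintype.sum_prod_type _)

namespace IsEncoding

variable {V ι : Type*} {vars : Set V} {x : ι → (V → Bool) → Bool}

theorem exists_eq_true (hx : IsEncoding vars x) (j : ι) : ∃ σ, x j σ = true :=
  let ⟨σ, hσ⟩ := hx.1 j
  ⟨σ, (hσ σ).2 fun _ _ => rfl⟩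

theorem exists_and_iff (hx : IsEncoding vars x) {j : ι} {σ : V → Bool} (hσ : x j σ = true)
    (p : ι → Prop) : (∃ a, x a σ = true ∧ p a) ↔ p j := by
  refine ⟨fun ⟨a, ha, hpa⟩ => ?_, fun hp => ⟨j, hσ, hp⟩⟩
  by_cases haj : a = j
  · exact haj ▸ hpa
  · exact absurd ⟨ha, hσ⟩ (hx.2 a j haj σ)

theorem eq_of_univ (hx : IsEncoding Set.univ x) {j : ι} {σ τ : V → Bool}
    (hσ : x j σ = true) (hτ : x j τ = true) : τ = σ := by
  obtain ⟨ρ, hρ⟩ := hx.1 j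
  funext v
  rw [(hρ τ).1 hτ v trivial, (hρ σ).1 hσ v trivial]

theorem sum_ite_eq [Fintype V] [DecidableEq V] {M : Type*} [AddCommMonoid M]
    (hx : IsEncoding Set.univ x) {j : ι} {σ : V → Bool} (hσ : x j σ = true) (f : (V → Bool) → M) :
    ∑ τ, (if x j τ = true then f τ else 0) = f σ := by
  rw [Fintype.sum_eq_single σ fun τ hτ => if_neg fun h => hτ (hx.eq_of_univ hσ h), if_pos hσ]

end IsEncoding

namespace WMC

variable {V U F : Type*} [Fintype V] [DecidableEq V] [Fintype U] [DecidableEq U] [Field F]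

theorem and_const (φ : (V → Bool) → Bool) (b : Bool) (W : V → Bool → F) :
    WMC (fun τ => φ τ && b) W = if b then WMC φ W else 0 := by
  cases b <;> simp [WMC]

theorem sum_elim (φ : (V ⊕ U → Bool) → Bool) (W : V → Bool → F) (W' : U → Bool → F) :
    WMC φ (Sum.elim W W') =
      ∑ σ : U → Bool, (∏ u, W' u (σ u)) * WMC (fun τ => φ (Sum.elim τ σ)) W := by
  rw [WMC, Fintype.sum_sumArrow, Finset.sum_comm]
  refine Fintype.sum_congr _ _ fun σ => ?_
  rw [WMC, Finset.mul_sum]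
  refine Fintype.sum_congr _ _ fun τ => ?_
  simp only [Fintype.prod_sum_type, Sum.elim_inl, Sum.elim_inr, ite_mul, zero_mul, mul_comm]

theorem comp_inl (φ : (V → Bool) → Bool) (W : V → Bool → F) (W' : U → Bool → F) :
    WMC (fun τ => φ (fun v => τ (Sum.inl v))) (Sum.elim W W') =
      WMC φ W * WMC (fun _ => true) W' := by
  simp only [sum_elim, Sum.elim_inl, ← Finset.sum_mul, mul_comm (WMC φ W)]
  simp [WMC]

theorem comp_inr (φ : (U → Bool) → Bool) (W : V → Bool → F) (W' : U → Bool → F) :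
    WMC (fun τ => φ (fun u => τ (Sum.inr u))) (Sum.elim W W') =
      WMC (fun _ => true) W * WMC φ W' := by
  simp only [sum_elim, Sum.elim_inr]
  simp [WMC, Finset.mul_sum, mul_comm]

end WMC

/-- The control variable `c` is the `Unit` summand; the fresh strings `x` and `y` live on `X`
and `Y`. -/
theorem matadd_represents_general {V₁ V₂ X Y : Type*}
    [Fintype V₁] [DecidableEq V₁] [Fintype V₂] [DecidableEq V₂]
    [Fintype X] [DecidableEq X] [Fintype Y] [DecidableEq Y]
    {F : Type*} [Field F] {q m n : ℕ}
    (φ₁ : (V₁ → Bool) → Bool) (φ₂ : (V₂ → Bool) → Bool)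
    (W₁ : V₁ → Bool → F) (W₂ : V₂ → Bool → F)
    (x₁ : Fin (q ^ m) → (V₁ → Bool) → Bool) (y₁ : Fin (q ^ n) → (V₁ → Bool) → Bool)
    (x₂ : Fin (q ^ m) → (V₂ → Bool) → Bool) (y₂ : Fin (q ^ n) → (V₂ → Bool) → Bool)
    (x : Fin (q ^ m) → (X → Bool) → Bool) (hx : IsEncoding (Set.univ : Set X) x)
    (y : Fin (q ^ n) → (Y → Bool) → Bool) (hy : IsEncoding (Set.univ : Set Y) y)
    (M₁ M₂ : Matrix (Fin (q ^ n)) (Fin (q ^ m)) F)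
    (h₁ : Represents φ₁ W₁ x₁ y₁ M₁) (h₂ : Represents φ₂ W₂ x₂ y₂ M₂)
    (hW₁ : WMC (fun _ : V₁ → Bool => true) W₁ ≠ 0)
    (hW₂ : WMC (fun _ : V₂ → Bool => true) W₂ ≠ 0) :
    Represents (V := (V₁ ⊕ V₂) ⊕ ((X ⊕ Y) ⊕ Unit))
      (fun τ =>
        (τ (Sum.inr (Sum.inr ())) ||
          (decide (∃ a : Fin (q ^ m),
              x a (fun v => τ (Sum.inr (Sum.inl (Sum.inl v)))) = true ∧
              x₁ a (fun v => τ (Sum.inl (Sum.inl v))) = true) &&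
           decide (∃ a : Fin (q ^ n),
              y a (fun v => τ (Sum.inr (Sum.inl (Sum.inr v)))) = true ∧
              y₁ a (fun v => τ (Sum.inl (Sum.inl v))) = true) &&
           φ₁ (fun v => τ (Sum.inl (Sum.inl v))))) &&
        (!(τ (Sum.inr (Sum.inr ()))) ||
          (decide (∃ a : Fin (q ^ m),
              x a (fun v => τ (Sum.inr (Sum.inl (Sum.inl v)))) = true ∧
              x₂ a (fun v => τ (Sum.inl (Sum.inr v))) = true) &&
           decide (∃ a : Fin (q ^ n),
              y a (fun v => τ (Sum.inr (Sum.inl (Sum.inr v)))) = true ∧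
              y₂ a (fun v => τ (Sum.inl (Sum.inr v))) = true) &&
           φ₂ (fun v => τ (Sum.inl (Sum.inr v))))))
      (Sum.elim (Sum.elim W₁ W₂)
        (Sum.elim (fun _ _ => (1 : F))
          (fun _ b => if b then (WMC (fun _ : V₁ → Bool => true) W₁)⁻¹
                      else (WMC (fun _ : V₂ → Bool => true) W₂)⁻¹)))
      (fun j τ => x j (fun v => τ (Sum.inr (Sum.inl (Sum.inl v)))))
      (fun i τ => y i (fun v => τ (Sum.inr (Sum.inl (Sum.inr v)))))
      (M₁ + M₂) := by
  intro i j
  obtain ⟨σx, hσx⟩ := hx.exists_eq_true j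
  obtain ⟨σy, hσy⟩ := hy.exists_eq_true i
  rw [Matrix.add_apply, h₁, h₂, WMC.sum_elim]
  -- `Sum.elim` is reduced before `WMC.and_const` creates the `ite`s, so that their `Decidable`
  -- instances match the conditions `hx.sum_ite_eq` and `hy.sum_ite_eq` look for.
  simp only [Fintype.sum_sumArrow, Sum.elim_inl, Sum.elim_inr, Fintype.prod_sum_type,
    Finset.prod_const_one, one_mul]
  simp only [WMC.and_const, mul_ite, mul_zero, Finset.sum_ite_irrel,
    Finset.sum_const_zero, hx.sum_ite_eq hσx, hy.sum_ite_eq hσy]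
  simp only [hx.exists_and_iff hσx, hy.exists_and_iff hσy]
  rw [← (Equiv.funUnique Unit Bool).symm.sum_comp, Fintype.sum_bool]
  simp only [Equiv.funUnique_symm_apply, uniqueElim_const, Fintype.prod_unique,
    Bool.decide_eq_true, Bool.true_or, Bool.not_true, Bool.false_or, Bool.true_and,
    Bool.not_false, Bool.and_true, if_true, if_false, Bool.false_eq_true]
  rw [WMC.comp_inl (fun t => x₁ j t && y₁ i t && φ₁ t),
    WMC.comp_inr (fun t => x₂ j t && y₂ i t && φ₂ t), inv_mul_cancel_left₀ hW₁, mul_comm,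
    mul_inv_cancel_right₀ hW₂, add_comm]
  simp only [Bool.and_comm, Bool.and_left_comm]

/-- Matrix addition of WMC representations.  The two representations
live on disjoint variable sets `V₁`, `V₂`; the fresh input/output strings `x`, `y`
live on fresh variable sets `X`, `Y`, and the fresh control variable `c` is the
`Unit` summand.  With
`φ ≡ (¬c → ((x ↔ x₁) ∧ (y ↔ y₁) ∧ φ₁)) ∧ (c → ((x ↔ x₂) ∧ (y ↔ y₂) ∧ φ₂))`,
the weights `W_c(c,1) = 1/WMC(⊤,W₁)`, `W_c(c,0) = 1/WMC(⊤,W₂)`, and constant weight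
`1` on `var(x) ∪ var(y)`, the tuple `(φ, W₁ ∪ W₂ ∪ W_c ∪ W_{xy}, x, y, q)` represents
`M₁ + M₂`. -/
theorem matadd_represents {V₁ V₂ X Y : Type*}
    [Fintype V₁] [DecidableEq V₁] [Fintype V₂] [DecidableEq V₂]
    [Fintype X] [DecidableEq X] [Fintype Y] [DecidableEq Y]
    {F : Type*} [Field F] {q m n : ℕ} (hq : 2 ≤ q)
    (φ₁ : (V₁ → Bool) → Bool) (φ₂ : (V₂ → Bool) → Bool)
    (W₁ : V₁ → Bool → F) (W₂ : V₂ → Bool → F)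
    (x₁ : Fin (q ^ m) → (V₁ → Bool) → Bool) (y₁ : Fin (q ^ n) → (V₁ → Bool) → Bool)
    (x₂ : Fin (q ^ m) → (V₂ → Bool) → Bool) (y₂ : Fin (q ^ n) → (V₂ → Bool) → Bool)
    (x₁vars y₁vars : Set V₁) (hx₁ : IsEncoding x₁vars x₁) (hy₁ : IsEncoding y₁vars y₁)
    (x₂vars y₂vars : Set V₂) (hx₂ : IsEncoding x₂vars x₂) (hy₂ : IsEncoding y₂vars y₂)
    (x : Fin (q ^ m) → (X → Bool) → Bool) (hx : IsEncoding (Set.univ : Set X) x)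
    (y : Fin (q ^ n) → (Y → Bool) → Bool) (hy : IsEncoding (Set.univ : Set Y) y)
    (M₁ M₂ : Matrix (Fin (q ^ n)) (Fin (q ^ m)) F)
    (h₁ : Represents φ₁ W₁ x₁ y₁ M₁) (h₂ : Represents φ₂ W₂ x₂ y₂ M₂)
    (hW₁ : WMC (fun _ : V₁ → Bool => true) W₁ ≠ 0)
    (hW₂ : WMC (fun _ : V₂ → Bool => true) W₂ ≠ 0) :
    Represents (V := (V₁ ⊕ V₂) ⊕ ((X ⊕ Y) ⊕ Unit))
      (fun τ =>
        (τ (Sum.inr (Sum.inr ())) ||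
          (decide (∃ a : Fin (q ^ m),
              x a (fun v => τ (Sum.inr (Sum.inl (Sum.inl v)))) = true ∧
              x₁ a (fun v => τ (Sum.inl (Sum.inl v))) = true) &&
           decide (∃ a : Fin (q ^ n),
              y a (fun v => τ (Sum.inr (Sum.inl (Sum.inr v)))) = true ∧
              y₁ a (fun v => τ (Sum.inl (Sum.inl v))) = true) &&
           φ₁ (fun v => τ (Sum.inl (Sum.inl v))))) &&
        (!(τ (Sum.inr (Sum.inr ()))) ||
          (decide (∃ a : Fin (q ^ m),
              x a (fun v => τ (Sum.inr (Sum.inl (Sum.inl v)))) = true ∧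
              x₂ a (fun v => τ (Sum.inl (Sum.inr v))) = true) &&
           decide (∃ a : Fin (q ^ n),
              y a (fun v => τ (Sum.inr (Sum.inl (Sum.inr v)))) = true ∧
              y₂ a (fun v => τ (Sum.inl (Sum.inr v))) = true) &&
           φ₂ (fun v => τ (Sum.inl (Sum.inr v))))))
      (Sum.elim (Sum.elim W₁ W₂)
        (Sum.elim (fun _ _ => (1 : F))
          (fun _ b => if b then (WMC (fun _ : V₁ → Bool => true) W₁)⁻¹
                      else (WMC (fun _ : V₂ → Bool => true) W₂)⁻¹)))
      (fun j τ => x j (fun v => τ (Sum.inr (Sum.inl (Sum.inl v)))))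
      (fun i τ => y i (fun v => τ (Sum.inr (Sum.inl (Sum.inr v)))))
      (M₁ + M₂) :=
  matadd_represents_general φ₁ φ₂ W₁ W₂ x₁ y₁ x₂ y₂ x hx y hy M₁ M₂ h₁ h₂ hW₁ hW₂
end

section
/- Let q ≥ 2 and suppose the tuple (φ₁, W₁, x₁, y₁, q) represents the q^{n₁} × q^{m₁} matrix M₁ and the tuple (φ₂, W₂, x₂, y₂, q) represents the q^{n₂} × q^{m₂} matrix M₂, where W₁ : V₁ × {0,1} → F and W₂ : V₂ × {0,1} → F are weight functions into a field F with V₁ ∩ V₂ = ∅. Then the tuple (φ₁ ∧ φ₂, W₁ ∪ W₂, x₁x₂, y₁y₂, q), whose input and output strings are the concatenations of the respective strings, represents the Kronecker product M₁ ⊗ M₂. -/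
/-- Kronecker product of WMC representations.  If `(φ₁, W₁, x₁, y₁, q)`
represents `M₁` and `(φ₂, W₂, x₂, y₂, q)` represents `M₂` on disjoint variable sets
`V₁`, `V₂`, then `(φ₁ ∧ φ₂, W₁ ∪ W₂, x₁x₂, y₁y₂, q)` (with concatenated input and
output strings, indexed by pairs) represents the Kronecker product `M₁ ⊗ M₂`. -/
theorem kronecker_represents {V₁ V₂ : Type*} [Fintype V₁] [DecidableEq V₁]
    [Fintype V₂] [DecidableEq V₂] {F : Type*} [Field F]
    {q m₁ n₁ m₂ n₂ : ℕ} (hq : 2 ≤ q)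
    (φ₁ : (V₁ → Bool) → Bool) (φ₂ : (V₂ → Bool) → Bool)
    (W₁ : V₁ → Bool → F) (W₂ : V₂ → Bool → F)
    (x₁ : Fin (q ^ m₁) → (V₁ → Bool) → Bool) (y₁ : Fin (q ^ n₁) → (V₁ → Bool) → Bool)
    (x₂ : Fin (q ^ m₂) → (V₂ → Bool) → Bool) (y₂ : Fin (q ^ n₂) → (V₂ → Bool) → Bool)
    (x₁vars y₁vars : Set V₁) (hx₁ : IsEncoding x₁vars x₁) (hy₁ : IsEncoding y₁vars y₁)
    (x₂vars y₂vars : Set V₂) (hx₂ : IsEncoding x₂vars x₂) (hy₂ : IsEncoding y₂vars y₂)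
    (M₁ : Matrix (Fin (q ^ n₁)) (Fin (q ^ m₁)) F)
    (M₂ : Matrix (Fin (q ^ n₂)) (Fin (q ^ m₂)) F)
    (h₁ : Represents φ₁ W₁ x₁ y₁ M₁) (h₂ : Represents φ₂ W₂ x₂ y₂ M₂) :
    Represents (V := V₁ ⊕ V₂)
      (fun τ => φ₁ (fun v => τ (Sum.inl v)) && φ₂ (fun v => τ (Sum.inr v)))
      (Sum.elim W₁ W₂)
      (fun j : Fin (q ^ m₁) × Fin (q ^ m₂) => fun τ =>
        x₁ j.1 (fun v => τ (Sum.inl v)) && x₂ j.2 (fun v => τ (Sum.inr v)))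
      (fun i : Fin (q ^ n₁) × Fin (q ^ n₂) => fun τ =>
        y₁ i.1 (fun v => τ (Sum.inl v)) && y₂ i.2 (fun v => τ (Sum.inr v)))
      (Matrix.kroneckerMap (· * ·) M₁ M₂) := by
  intro i j
  rw [Matrix.kroneckerMap, Matrix.of_apply, h₁ i.1 j.1, h₂ i.2 j.2]
  unfold WMC
  rw [Finset.sum_mul_sum]
  rw [← Fintype.sum_prod_type']
  rw [← (Equiv.sumArrowEquivProdArrow V₁ V₂ Bool).sum_comp]
  refine Finset.sum_congr rfl fun τ _ => ?_
  simp only [Equiv.sumArrowEquivProdArrow, Equiv.coe_fn_mk, Fintype.prod_sum_type,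
    Sum.elim_inl, Sum.elim_inr, ite_zero_mul_ite_zero, Bool.and_eq_true, Function.comp]
  refine if_congr ?_ rfl rfl
  tauto
end

section
/- Let q ≥ 2 and suppose the tuple (φ, W, x, y, q) represents the square q^n × q^n matrix M over a field F, where x and y are strings of equal length n. Then WMC(φ ∧ (x ↔ y) ∧ val_x, W) = tr(M), the trace of M. -/
/-- Trace of a WMC representation.  If `(φ, W, x, y, q)` represents a
square matrix `M` (input and output strings of equal length `n`), then
`WMC(φ ∧ (x ↔ y) ∧ val_x, W) = tr(M)`, where `(x ↔ y) ≡ ⋁_a ((x = a) ∧ (y = a))`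
and `val_x ≡ ⋁_a (x = a)`. -/
theorem trace_wmc {V : Type*} [Fintype V] [DecidableEq V]
    {F : Type*} [Field F] {q n : ℕ} (hq : 2 ≤ q)
    (φ : (V → Bool) → Bool) (W : V → Bool → F)
    (x : Fin (q ^ n) → (V → Bool) → Bool) (y : Fin (q ^ n) → (V → Bool) → Bool)
    (xvars yvars : Set V) (hx : IsEncoding xvars x) (hy : IsEncoding yvars y)
    (M : Matrix (Fin (q ^ n)) (Fin (q ^ n)) F)
    (hM : Represents φ W x y M) :
    WMC (fun τ =>
        φ τ &&
        decide (∃ a : Fin (q ^ n), x a τ = true ∧ y a τ = true) &&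
        decide (∃ a : Fin (q ^ n), x a τ = true)) W
      = M.trace := by
  unfold Represents at hM
  unfold Matrix.trace Matrix.diag WMC
  simp only [hM, WMC]
  rw [Finset.sum_comm, eq_comm]
  refine Finset.sum_congr rfl fun τ _ => ?_
  by_cases hφ : φ τ = true
  · by_cases hex : ∃ a, x a τ = true ∧ y a τ = true
    · obtain ⟨a, hxa, hya⟩ := hex
      rw [Finset.sum_eq_single a]
      · simp only [hφ, hxa, hya, Bool.and_self, Bool.true_and]
        have h1 : (∃ b : Fin (q ^ n), x b τ = true ∧ y b τ = true) := ⟨a, hxa, hya⟩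
        have h2 : (∃ b : Fin (q ^ n), x b τ = true) := ⟨a, hxa⟩
        simp [h1, h2]
      · intro b _ hb
        have h := hx.2 b a hb τ
        have : ¬ (x b τ = true) := fun hxb => h ⟨hxb, hxa⟩
        simp [this]
      · simp
    · rw [Finset.sum_eq_zero]
      · simp only [hφ, Bool.true_and]
        have : ¬ (∃ b : Fin (q ^ n), x b τ = true ∧ y b τ = true) := hex
        simp [this]
      · intro b _
        by_cases hxb : x b τ = true
        · have hyb : ¬ y b τ = true := fun h => hex ⟨b, hxb, h⟩
          simp [hxb, hyb]
        · simp [hxb]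
  · simp [hφ]
end

section
/- Let Λ be a finite set of sites, J : Λ × Λ → ℝ interaction strengths, h : Λ → ℝ external field strengths, and β ∈ ℝ. Consider the finite set of Boolean variables consisting of one variable x_i for each i ∈ Λ and one variable x_{ij} for each pair (i, j) ∈ Λ × Λ, the Boolean formula φ = ⋀_{(i,j) ∈ Λ×Λ} (x_{ij} ↔ (x_i ↔ x_j)), and the weight function W with W(x_{ij}, 1) = e^{β J_{ij}}, W(x_{ij}, 0) = e^{−β J_{ij}}, W(x_i, 1) = e^{β h_i}, W(x_i, 0) = e^{−β h_i}. Then WMC(φ, W) = Z_{β,I} = ∑_{σ : Λ → {−1,1}} exp(β (∑_{(i,j) ∈ Λ×Λ} J_{ij} σ_i σ_j + ∑_{i ∈ Λ} h_i σ_i)), the partition function of the Ising model (Λ, J, h) at inverse temperature β. -/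

private noncomputable def boolSign : Bool ≃ ({-1, 1} : Finset ℝ) where
  toFun b := if b then ⟨1, by norm_num⟩ else ⟨-1, by norm_num⟩
  invFun x := decide ((x : ℝ) = 1)
  left_inv b := by cases b <;> norm_num
  right_inv x := by
    obtain ⟨x, hx⟩ := x
    simp only [Finset.mem_insert, Finset.mem_singleton] at hx
    rcases hx with h | h <;> subst h <;> norm_num

private lemma coe_boolSign (b : Bool) :
    ((boolSign b : ({-1,1} : Finset ℝ)) : ℝ) = if b then 1 else -1 := by
  cases b <;> simp [boolSign]

private lemma exp_field (c : ℝ) (b : Bool) :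
    (if b then Real.exp c else Real.exp (-c)) = Real.exp (c * (if b then (1:ℝ) else -1)) := by
  cases b <;> simp

private lemma exp_pair (c : ℝ) (a b : Bool) :
    (if (a == b) then Real.exp c else Real.exp (-c))
      = Real.exp (c * (if a then (1:ℝ) else -1) * (if b then (1:ℝ) else -1)) := by
  cases a <;> cases b <;> norm_num

/-- The direct WMC encoding of the Ising-model partition function.
Variables are one `x_i` per site `i ∈ Λ` (the left summand) and one `x_{ij}` per
pair `(i,j) ∈ Λ × Λ` (the right summand); the formula forces
`x_{ij} ↔ (x_i ↔ x_j)`; the weights are `W(x_{ij}, ±) = e^{±β J_{ij}}` and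
`W(x_i, ±) = e^{±β h_i}`.  Then the weighted model count equals the partition
function `Z_{β,I} = ∑_{σ : Λ → {−1,1}} exp(β (∑_{(i,j)} J_{ij} σ_i σ_j + ∑_i h_i σ_i))`. -/
theorem ising_partition_wmc {Λ : Type*} [Fintype Λ] [DecidableEq Λ]
    (J : Λ → Λ → ℝ) (h : Λ → ℝ) (β : ℝ) :
    WMC (fun τ : Λ ⊕ (Λ × Λ) → Bool =>
        decide (∀ p : Λ × Λ, τ (Sum.inr p) = (τ (Sum.inl p.1) == τ (Sum.inl p.2))))
      (Sum.elim
        (fun i b => if b then Real.exp (β * h i) else Real.exp (-(β * h i)))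
        (fun p b => if b then Real.exp (β * J p.1 p.2) else Real.exp (-(β * J p.1 p.2))))
    = ∑ σ : Λ → ({-1, 1} : Finset ℝ),
        Real.exp (β * ((∑ p : Λ × Λ, J p.1 p.2 * (σ p.1 : ℝ) * (σ p.2 : ℝ))
          + ∑ i : Λ, h i * (σ i : ℝ))) := by
  classical
  unfold WMC
  rw [← (Equiv.sumArrowEquivProdArrow Λ (Λ × Λ) Bool).symm.sum_comp, Fintype.sum_prod_type]
  have key : ∀ a : Λ → Bool,
      (∑ b : Λ × Λ → Bool,
        if decide (∀ p : Λ × Λ,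
            (Equiv.sumArrowEquivProdArrow Λ (Λ × Λ) Bool).symm (a, b) (Sum.inr p)
              = ((Equiv.sumArrowEquivProdArrow Λ (Λ × Λ) Bool).symm (a, b) (Sum.inl p.1)
                  == (Equiv.sumArrowEquivProdArrow Λ (Λ × Λ) Bool).symm (a, b) (Sum.inl p.2)))
        then ∏ v : Λ ⊕ (Λ × Λ), (Sum.elim
            (fun i b => if b then Real.exp (β * h i) else Real.exp (-(β * h i)))
            (fun p b => if b then Real.exp (β * J p.1 p.2) else Real.exp (-(β * J p.1 p.2)))
            : Λ ⊕ (Λ × Λ) → Bool → ℝ) v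
            ((Equiv.sumArrowEquivProdArrow Λ (Λ × Λ) Bool).symm (a, b) v)
        else 0)
      = (∏ i : Λ, if a i then Real.exp (β * h i) else Real.exp (-(β * h i)))
        * ∏ p : Λ × Λ, if (a p.1 == a p.2) then Real.exp (β * J p.1 p.2)
            else Real.exp (-(β * J p.1 p.2)) := by
    intro a
    have : ∀ b : Λ × Λ → Bool,
        (decide (∀ p : Λ × Λ,
            (Equiv.sumArrowEquivProdArrow Λ (Λ × Λ) Bool).symm (a, b) (Sum.inr p)
              = ((Equiv.sumArrowEquivProdArrow Λ (Λ × Λ) Bool).symm (a, b) (Sum.inl p.1)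
                  == (Equiv.sumArrowEquivProdArrow Λ (Λ × Λ) Bool).symm (a, b) (Sum.inl p.2))))
        = decide (b = fun p : Λ × Λ => a p.1 == a p.2) := by
      intro b
      simp [Equiv.sumArrowEquivProdArrow, funext_iff]
    simp only [this, decide_eq_true_eq]
    rw [Fintype.sum_ite_eq' (fun p : Λ × Λ => a p.1 == a p.2)]
    simp [Equiv.sumArrowEquivProdArrow, Fintype.prod_sum_type]
  simp only [key]
  rw [← ((Equiv.refl Λ).arrowCongr boolSign).sum_comp]
  apply Finset.sum_congr rfl
  intro a _
  have ha : ∀ i, (((Equiv.refl Λ).arrowCongr boolSign) a i : ℝ) = if a i then 1 else -1 := by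
    intro i; simp [Equiv.arrowCongr, coe_boolSign]
  simp only [ha, mul_add, Real.exp_add, Finset.mul_sum, Real.exp_sum]
  rw [mul_comm]
  congr 1
  · exact Finset.prod_congr rfl fun p _ => by
      rw [exp_pair (β * J p.1 p.2)]; congr 1; ring
  · exact Finset.prod_congr rfl fun i _ => by
      rw [exp_field (β * h i)]; congr 1; ring
end
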